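/- Let σ ∈ AOP(n,m) and let F(σ) = [b_{j,k}] be the associated Bott matrix. For i ∈ [m-1], the matrix obtained by conjugating F(σ) by the permutation matrix of the simple transposition s_i = (i,i+1) is again a Bott matrix of BS type (i.e., lies in B(n,m)) if and only if i and i+1 are not neighbors in σ. Here j and k are neighbors in σ if they lie in the same block of some ordered partition σ_a or in consecutive blocks of the same σ_a. -/

import Mathlib

/-- An ordered partition: a list of (nonempty, pairwise disjoint) finite sets. -/
abbrev OP := List (Finset ℕ)

/-- An assembly of ordered partitions: a list of ordered partitions. -/
abbrev Assembly := List OP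

/-- The union of the blocks of an ordered partition. -/
def Uop (op : OP) : Finset ℕ := op.foldr (· ∪ ·) ∅

/-- `σ` is an assembly of ordered partitions of `[m]` with bound `n`. -/
def IsAOP (n m : ℕ) (σ : Assembly) : Prop :=
  (∀ op ∈ σ, op ≠ [] ∧ ∀ b ∈ op, b.Nonempty) ∧
  σ.flatten.Pairwise (fun s t => Disjoint s t) ∧
  σ.flatten.foldr (· ∪ ·) ∅ = Finset.Icc 1 m ∧
  σ.Pairwise (fun o₁ o₂ => (Uop o₁).min < (Uop o₂).min) ∧
  (σ.map List.length).sum + (σ.length - 1) ≤ n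

/-- `x` and `y` lie in a common block of some ordered partition of `σ`. -/
def sameBlock (σ : Assembly) (x y : ℕ) : Prop :=
  ∃ op ∈ σ, ∃ b ∈ op, x ∈ b ∧ y ∈ b

/-- `x` and `y` lie in consecutive blocks of some ordered partition of `σ`. -/
def adjBlock (σ : Assembly) (x y : ℕ) : Prop :=
  ∃ op ∈ σ, ∃ t : ℕ, t + 1 < op.length ∧
    ((x ∈ op[t]! ∧ y ∈ op[t + 1]!) ∨ (y ∈ op[t]! ∧ x ∈ op[t + 1]!))

/-- `x` and `y` are neighbors in `σ`. -/
def Neighbor (σ : Assembly) (x y : ℕ) : Prop := sameBlock σ x y ∨ adjBlock σ x y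

open Classical in
/-- The Bott matrix `F(σ)` associated to an assembly `σ` of ordered partitions of `[m]`
(the element of `[m]` corresponding to the index `j : Fin m` is `j + 1`). -/
noncomputable def FMat (m : ℕ) (σ : Assembly) : Matrix (Fin m) (Fin m) ℤ :=
  fun j k =>
    if j = k then -1
    else if k < j then
      (if sameBlock σ ((j : ℕ) + 1) ((k : ℕ) + 1) then -2
       else if adjBlock σ ((j : ℕ) + 1) ((k : ℕ) + 1) then 1 else 0)
    else 0

/-- The set of indices (1-based) on which the sequence `i` takes the value `v`. -/
def fiberSet (m : ℕ) (i : Fin m → ℤ) (v : ℤ) : Finset ℕ :=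
  (Finset.univ.filter (fun k => i k = v)).image (fun k : Fin m => (k : ℕ) + 1)

/-- Group a sorted list of integers into maximal runs of consecutive integers. -/
def groupRuns : List ℤ → List (List ℤ)
  | [] => []
  | a :: rest =>
    match groupRuns rest with
    | [] => [[a]]
    | [] :: gs => [a] :: [] :: gs
    | (b :: g) :: gs =>
        if a + 1 = b then (a :: b :: g) :: gs else [a] :: (b :: g) :: gs

/-- The map `α` sending a sequence to its assembly of ordered partitions. -/
def alpha (m : ℕ) (i : Fin m → ℤ) : Assembly :=
  (groupRuns ((Finset.image i Finset.univ).sort (· ≤ ·))).map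
    (fun run => run.map (fiberSet m i))

/-- The equivalence `∼` on assemblies: same length, and each constituent ordered
partition agrees up to reversal. -/
def SimRel (σ τ : Assembly) : Prop :=
  List.Forall₂ (fun s t => t = s ∨ t = s.reverse) σ τ

/-- The Bott matrix of BS type associated to a sequence `i`. -/
def bottMatrix (m : ℕ) (i : Fin m → ℤ) : Matrix (Fin m) (Fin m) ℤ :=
  fun j k =>
    if j = k then -1
    else if k < j then
      (if i j = i k then -2 else if |i j - i k| = 1 then 1 else 0)
    else 0

/-- The set `B(n,m)` of Bott matrices of BS type arising from sequences in `[n]^m`. -/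
def BSet (n m : ℕ) : Set (Matrix (Fin m) (Fin m) ℤ) :=
  {B | ∃ i : Fin m → ℤ, (∀ t, i t ∈ Finset.Icc (1 : ℤ) n) ∧ B = bottMatrix m i}

/-- `B(n,m)` as the set of matrices of the form `F(σ)` for `σ ∈ AOP(n,m)`. -/
def BSetF (n m : ℕ) : Set (Matrix (Fin m) (Fin m) ℤ) :=
  {B | ∃ σ : Assembly, IsAOP n m σ ∧ FMat m σ = B}

/-!
For `i, i+1` neighbours in `σ`, the entry `b_{i+1,i}` of `F(σ)` is nonzero and conjugation by
`s_i` moves it above the diagonal. Otherwise relabel `σ` by `s_i` and re-sort its ordered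
partitions by their minima: the result is again in `AOP(n,m)`, and its matrix is the conjugate,
because `s_i` preserves the relative order of every pair except `{i, i+1}`, whose entry is `0`.
-/

lemma mem_foldr_union {α : Type*} [DecidableEq α] {l : List (Finset α)} {x : α} :
    x ∈ l.foldr (· ∪ ·) ∅ ↔ ∃ s ∈ l, x ∈ s := by
  induction l with
  | nil => simp
  | cons a l ih => simp [ih]

lemma mem_Uop {op : OP} {x : ℕ} : x ∈ Uop op ↔ ∃ b ∈ op, x ∈ b := mem_foldr_union

lemma Finset.mem_image_equiv {α : Type*} [DecidableEq α] {e : Equiv.Perm α} {s : Finset α}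
    {x : α} : x ∈ s.image e ↔ e.symm x ∈ s := by
  rw [Equiv.image_eq_preimage_symm_of_finset, Finset.mem_preimage]

lemma neighbor_comm {σ : Assembly} {x y : ℕ} : Neighbor σ x y ↔ Neighbor σ y x := by
  unfold Neighbor sameBlock adjBlock
  constructor <;>
  · rintro (⟨op, hop, b, hb, hx, hy⟩ | ⟨op, hop, t, ht, hxy⟩)
    exacts [Or.inl ⟨op, hop, b, hb, hy, hx⟩, Or.inr ⟨op, hop, t, ht, hxy.symm⟩]

noncomputable def nbrEntry (σ : Assembly) (x y : ℕ) : ℤ :=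
  open Classical in
  if sameBlock σ x y then -2 else if adjBlock σ x y then 1 else 0

lemma FMat_apply (m : ℕ) (σ : Assembly) (a b : Fin m) :
    FMat m σ a b = if a = b then -1 else if b < a then nbrEntry σ (a + 1) (b + 1) else 0 :=
  rfl

lemma nbrEntry_eq_zero_iff {σ : Assembly} {x y : ℕ} :
    nbrEntry σ x y = 0 ↔ ¬ Neighbor σ x y := by
  unfold nbrEntry Neighbor
  split_ifs <;> simp_all

lemma nbrEntry_congr {σ σ' : Assembly} {x y x' y' : ℕ}
    (hsame : sameBlock σ x y ↔ sameBlock σ' x' y')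
    (hadj : adjBlock σ x y ↔ adjBlock σ' x' y') :
    nbrEntry σ x y = nbrEntry σ' x' y' := by
  unfold nbrEntry
  split_ifs <;> simp_all

lemma nbrEntry_perm {σ σ' : Assembly} (hp : σ.Perm σ') (x y : ℕ) :
    nbrEntry σ x y = nbrEntry σ' x y :=
  nbrEntry_congr (by simp only [sameBlock, hp.mem_iff]) (by simp only [adjBlock, hp.mem_iff])

/-- Entries of non-neighbouring pairs vanish on both sides, so only neighbouring pairs need to
keep their relative order under `e`. -/
lemma FMat_eq_submatrix {m : ℕ} {σ σ' : Assembly} (e : Equiv.Perm (Fin m))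
    (hentry : ∀ a b : Fin m, nbrEntry σ' (a + 1) (b + 1) = nbrEntry σ (e a + 1) (e b + 1))
    (horder : ∀ a b : Fin m, nbrEntry σ' (a + 1) (b + 1) ≠ 0 → (e b < e a ↔ b < a)) :
    FMat m σ' = (FMat m σ).submatrix e e := by
  ext a b
  simp only [Matrix.submatrix_apply, FMat_apply, e.injective.eq_iff, ← hentry]
  by_cases hzero : nbrEntry σ' (a + 1) (b + 1) = 0
  · simp only [hzero, ite_self]
  · simp only [horder a b hzero]

def relabel (τ : Equiv.Perm ℕ) (σ : Assembly) : Assembly :=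
  σ.map (List.map (Finset.image τ))

section relabel

variable (τ : Equiv.Perm ℕ) (σ : Assembly)

lemma flatten_relabel : (relabel τ σ).flatten = σ.flatten.map (Finset.image τ) := by
  rw [relabel, List.map_flatten]

lemma sameBlock_relabel (x y : ℕ) :
    sameBlock (relabel τ σ) x y ↔ sameBlock σ (τ.symm x) (τ.symm y) := by
  simp only [sameBlock, relabel, List.mem_map, exists_exists_and_eq_and, Finset.mem_image_equiv]

lemma adjBlock_relabel (x y : ℕ) :
    adjBlock (relabel τ σ) x y ↔ adjBlock σ (τ.symm x) (τ.symm y) := by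
  have getElem!_map : ∀ (op : OP) t, t < op.length →
      (op.map (Finset.image τ))[t]! = op[t]!.image τ := fun op t ht => by
    rw [getElem!_pos _ t (by simpa using ht), getElem!_pos op t ht, List.getElem_map]
  simp only [adjBlock, relabel, List.mem_map, exists_exists_and_eq_and, List.length_map]
  refine exists_congr fun op => and_congr_right fun _ =>
    exists_congr fun t => and_congr_right fun ht => ?_
  rw [getElem!_map op t (by omega), getElem!_map op (t + 1) ht]
  simp only [Finset.mem_image_equiv]

lemma nbrEntry_relabel (x y : ℕ) :
    nbrEntry (relabel τ σ) x y = nbrEntry σ (τ.symm x) (τ.symm y) :=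
  nbrEntry_congr (sameBlock_relabel τ σ x y) (adjBlock_relabel τ σ x y)

end relabel

lemma Finset.min_ne_min_of_disjoint {α : Type*} [LinearOrder α] {s t : Finset α}
    (hs : s.Nonempty) (hst : Disjoint s t) : s.min ≠ t.min := by
  obtain ⟨a, ha⟩ := Finset.min_of_nonempty hs
  intro heq
  exact Finset.disjoint_left.1 hst (Finset.mem_of_min ha) (Finset.mem_of_min (heq ▸ ha))

lemma Uop_nonempty {op : OP} (hop : op ≠ []) (hb : ∀ b ∈ op, b.Nonempty) :
    (Uop op).Nonempty := by
  obtain ⟨b, hb_mem⟩ := List.exists_mem_of_ne_nil op hop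
  obtain ⟨x, hx⟩ := hb b hb_mem
  exact ⟨x, mem_Uop.2 ⟨b, hb_mem, hx⟩⟩

lemma disjoint_Uop {o₁ o₂ : OP} (h : ∀ s ∈ o₁, ∀ t ∈ o₂, Disjoint s t) :
    Disjoint (Uop o₁) (Uop o₂) := by
  refine Finset.disjoint_left.2 fun {x} hx₁ hx₂ => ?_
  obtain ⟨s, hs, hxs⟩ := mem_Uop.1 hx₁
  obtain ⟨t, ht, hxt⟩ := mem_Uop.1 hx₂
  exact Finset.disjoint_left.1 (h s hs t ht) hxs hxt

def sortByMin (σ : Assembly) : Assembly :=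
  σ.insertionSort fun o₁ o₂ => (Uop o₁).min ≤ (Uop o₂).min

lemma sortByMin_perm (σ : Assembly) : (sortByMin σ).Perm σ :=
  List.perm_insertionSort _ σ

lemma isAOP_sortByMin {n m : ℕ} {σ : Assembly}
    (h₁ : ∀ op ∈ σ, op ≠ [] ∧ ∀ b ∈ op, b.Nonempty)
    (h₂ : σ.flatten.Pairwise (fun s t => Disjoint s t))
    (h₃ : σ.flatten.foldr (· ∪ ·) ∅ = Finset.Icc 1 m)
    (h₅ : (σ.map List.length).sum + (σ.length - 1) ≤ n) :
    IsAOP n m (sortByMin σ) := by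
  have hp := sortByMin_perm σ
  have h₁' : ∀ op ∈ sortByMin σ, op ≠ [] ∧ ∀ b ∈ op, b.Nonempty :=
    fun op hop => h₁ op (hp.subset hop)
  have h₂' := (hp.flatten.pairwise_iff fun hd => hd.symm).2 h₂
  refine ⟨h₁', h₂', ?_, ?_, ?_⟩
  · ext x
    rw [← h₃, mem_foldr_union, mem_foldr_union]
    simp only [hp.flatten.mem_iff]
  · have hle : (sortByMin σ).Pairwise fun o₁ o₂ => (Uop o₁).min ≤ (Uop o₂).min :=
      List.pairwise_insertionSort _ σ
    have hne : (sortByMin σ).Pairwise fun o₁ o₂ => (Uop o₁).min ≠ (Uop o₂).min :=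
      (List.pairwise_flatten.1 h₂').2.imp_of_mem fun hmem _ hst =>
        Finset.min_ne_min_of_disjoint (Uop_nonempty (h₁' _ hmem).1 (h₁' _ hmem).2)
          (disjoint_Uop hst)
    exact (hle.and hne).imp fun h => lt_of_le_of_ne h.1 h.2
  · rwa [hp.length_eq, (hp.map _).sum_eq]

lemma IsAOP.relabel_sortByMin {n m : ℕ} {σ : Assembly} (h : IsAOP n m σ) {τ : Equiv.Perm ℕ}
    (hτ : ∀ x, τ x ∈ Finset.Icc 1 m ↔ x ∈ Finset.Icc 1 m) :
    IsAOP n m (sortByMin (relabel τ σ)) := by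
  obtain ⟨h₁, h₂, h₃, -, h₅⟩ := h
  apply isAOP_sortByMin
  · intro op' hop'
    obtain ⟨op, hop, rfl⟩ := List.mem_map.1 hop'
    refine ⟨by simpa using (h₁ op hop).1, fun b' hb' => ?_⟩
    obtain ⟨b, hb, rfl⟩ := List.mem_map.1 hb'
    exact ((h₁ op hop).2 b hb).image τ
  · rw [flatten_relabel, List.pairwise_map]
    exact h₂.imp (Finset.disjoint_image τ.injective).2
  · ext x
    rw [← τ.apply_symm_apply x, hτ, ← h₃, mem_foldr_union, mem_foldr_union, flatten_relabel]
    simp only [List.mem_map, exists_exists_and_eq_and, Finset.mem_image_equiv, τ.apply_symm_apply]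
  · simpa [relabel, Function.comp_def] using h₅

lemma swap_apply_mem_Icc_iff {p m x : ℕ} (hp : 1 ≤ p) (hpm : p + 1 ≤ m) :
    Equiv.swap p (p + 1) x ∈ Finset.Icc 1 m ↔ x ∈ Finset.Icc 1 m := by
  simp only [Finset.mem_Icc, Equiv.swap_apply_def]
  split_ifs <;> omega

lemma swap_apply_lt_swap_apply_iff {p x y : ℕ} (h : ¬ (x = p ∧ y = p + 1))
    (h' : ¬ (x = p + 1 ∧ y = p)) :
    Equiv.swap p (p + 1) x < Equiv.swap p (p + 1) y ↔ x < y := by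
  simp only [Equiv.swap_apply_def]
  split_ifs <;> omega

lemma Fin.swap_apply_lt_swap_apply_iff {m : ℕ} {j : Fin m} (hj : (j : ℕ) + 1 < m) {a b : Fin m}
    (h : ¬ (a = j ∧ b = ⟨j + 1, hj⟩)) (h' : ¬ (a = ⟨j + 1, hj⟩ ∧ b = j)) :
    Equiv.swap j ⟨j + 1, hj⟩ a < Equiv.swap j ⟨j + 1, hj⟩ b ↔ a < b := by
  simp only [Fin.lt_def, Fin.val_injective.map_swap]
  simp only [Fin.ext_iff] at h h'
  exact _root_.swap_apply_lt_swap_apply_iff h h'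

/-- for `σ ∈ AOP(n,m)` and `i ∈ [m-1]`, conjugating `F(σ)` by the
permutation matrix of the simple transposition `s_i` yields a matrix in `B(n,m)`
if and only if `i` and `i+1` are not neighbors in `σ`. -/
theorem conj_mem_BSet_iff (n m : ℕ) (σ : Assembly) (h : IsAOP n m σ)
    (j : Fin m) (hj : (j : ℕ) + 1 < m) :
    (FMat m σ).submatrix (Equiv.swap j ⟨(j : ℕ) + 1, hj⟩)
        (Equiv.swap j ⟨(j : ℕ) + 1, hj⟩) ∈ BSetF n m ↔
      ¬ Neighbor σ ((j : ℕ) + 1) ((j : ℕ) + 2) := by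
  set j' : Fin m := ⟨(j : ℕ) + 1, hj⟩
  have hjj' : j < j' := Fin.lt_def.2 (Nat.lt_succ_self j)
  constructor
  · rintro ⟨σ₀, -, hF⟩
    have := congrFun (congrFun hF j) j'
    refine nbrEntry_eq_zero_iff.1 ?_ ∘ neighbor_comm.1
    simpa [FMat_apply, hjj'.ne, hjj'.ne', hjj'.not_gt, hjj'] using this.symm
  · intro hnb
    set τ : Equiv.Perm ℕ := Equiv.swap ((j : ℕ) + 1) ((j : ℕ) + 1 + 1)
    have hentry : ∀ x y, nbrEntry (sortByMin (relabel τ σ)) x y = nbrEntry σ (τ x) (τ y) :=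
      fun x y => by rw [nbrEntry_perm (sortByMin_perm _), nbrEntry_relabel, Equiv.symm_swap]
    have hshift : ∀ a : Fin m, (Equiv.swap j j' a : ℕ) + 1 = τ (a + 1) :=
      ((add_left_injective 1).comp Fin.val_injective).map_swap j j'
    have hτ x := swap_apply_mem_Icc_iff (x := x) (Nat.le_add_left 1 j) hj
    refine ⟨_, h.relabel_sortByMin hτ, FMat_eq_submatrix _ (fun a b => ?_) fun a b hne => ?_⟩
    · rw [hentry, hshift, hshift]
    · rw [hentry] at hne
      refine Fin.swap_apply_lt_swap_apply_iff hj ?_ ?_ <;> rintro ⟨rfl, rfl⟩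
      · exact hne (by simpa [τ] using nbrEntry_eq_zero_iff.2 hnb)
      · exact hne (by simpa [τ] using nbrEntry_eq_zero_iff.2 (mt neighbor_comm.1 hnb))
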